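/- arXiv:1005.0440 — 2 statements merged into one kernel-verified Lean document; each statement's English description precedes it below -/
import Mathlib

section
/- Let h > 0 and α ≠ 0. Given any sampled classic PI controller with gains k_p, k_i such that k_p = −1/(α·h), there exists a unique K_P (namely K_P = α·h·k_i) so that the sampled i-P with parameters (α, K_P) produces the same control recursion; conversely if k_p ≠ −1/(α·h), no choice of K_P makes the two recursions agree for all error sequences. -/
/-!
Both recursions are affine in the increment `e n - e (n - 1)` and in `e n`, so they agree for all
error sequences iff the coefficients match: `k_p = -1 / (h α)` and `k_i h = K_P / α`. Testing on an
error that drops from `1` to `0` isolates the first condition.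
-/

namespace SampledController

noncomputable def piUpdate (k_p k_i h u e₀ e₁ : ℝ) : ℝ :=
  u + k_p * (e₁ - e₀) + k_i * h * e₁

noncomputable def iPUpdate (α K_P h u e₀ e₁ : ℝ) : ℝ :=
  u - (e₁ - e₀) / (h * α) + (K_P / α) * e₁

theorem piUpdate_eq_iPUpdate {h α k_p k_i : ℝ} (hα : α ≠ 0) (hk : k_p = -1 / (α * h))
    (u e₀ e₁ : ℝ) : piUpdate k_p k_i h u e₀ e₁ = iPUpdate α (α * h * k_i) h u e₀ e₁ := by
  subst hk
  unfold piUpdate iPUpdate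
  rw [mul_assoc α h k_i, mul_div_cancel_left₀ _ hα]
  ring

theorem gain_eq_of_piUpdate_eq_iPUpdate {h α k_p k_i K_P : ℝ}
    (H : piUpdate k_p k_i h 0 1 0 = iPUpdate α K_P h 0 1 0) : k_p = -1 / (α * h) := by
  unfold piUpdate iPUpdate at H
  rw [mul_comm α h]
  linarith

end SampledController

open SampledController in
theorem stmt_15_general (h α k_p k_i : ℝ) (hα : α ≠ 0) :
    (k_p = -1 / (α * h) →
      ∃! K_P : ℝ, K_P = α * h * k_i ∧
        ∀ (e : ℕ → ℝ) (uprev : ℝ) (n : ℕ), 1 ≤ n →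
          uprev + k_p * (e n - e (n - 1)) + k_i * h * e n
            = uprev - (e n - e (n - 1)) / (h * α) + (K_P / α) * e n) ∧
    (k_p ≠ -1 / (α * h) →
      ∀ K_P : ℝ, ¬ (∀ (e : ℕ → ℝ) (uprev : ℝ) (n : ℕ), 1 ≤ n →
          uprev + k_p * (e n - e (n - 1)) + k_i * h * e n
            = uprev - (e n - e (n - 1)) / (h * α) + (K_P / α) * e n)) := by
  constructor
  · intro hk
    refine ⟨α * h * k_i, ⟨rfl, fun e u n _ => piUpdate_eq_iPUpdate hα hk u (e (n - 1)) (e n)⟩,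
      fun _ hK => hK.1⟩
  · intro hk K_P hagree
    exact hk (gain_eq_of_piUpdate_eq_iPUpdate (hagree (fun m => if m = 0 then 1 else 0) 0 1 le_rfl))

theorem stmt_15 (h α k_p k_i : ℝ) (hh : 0 < h) (hα : α ≠ 0) :
    (k_p = -1 / (α * h) →
      ∃! K_P : ℝ, K_P = α * h * k_i ∧
        ∀ (e : ℕ → ℝ) (uprev : ℝ) (n : ℕ), 1 ≤ n →
          uprev + k_p * (e n - e (n - 1)) + k_i * h * e n
            = uprev - (e n - e (n - 1)) / (h * α) + (K_P / α) * e n) ∧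
    (k_p ≠ -1 / (α * h) →
      ∀ K_P : ℝ, ¬ (∀ (e : ℕ → ℝ) (uprev : ℝ) (n : ℕ), 1 ≤ n →
          uprev + k_p * (e n - e (n - 1)) + k_i * h * e n
            = uprev - (e n - e (n - 1)) / (h * α) + (K_P / α) * e n)) :=
  stmt_15_general h α k_p k_i hα
end

section
/- Let α ≠ 0, h > 0, K_P ∈ ℝ with |1 + h·K_P| < 1, and let the closed loop consist of the plant (y(n+1) − y(n))/h = F(n) + α·u(n) and the i-P controller using the delayed estimate F̂(n) = (y(n) − y(n−1))/h − α·u(n−1). Then the tracking error satisfies e(n+1) = (1 + h·K_P)·e(n) + h·(F(n) − F(n−1)); consequently, if |F(n) − F(n−1)| ≤ δ for all n, then limsup_{n→∞} |e(n)| ≤ h·δ/(1 − |1 + h·K_P|). -/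
/-!
The i-P controller cancels the plant's unknown dynamics with a one-step-old estimate: the plant
equation at time `n` gives `F̂(n+1) = F(n)`, so the closed loop is the stable scalar recursion
`e(n+1) = (1 + h K_P) e(n) + h (F(n) - F(n-1))` driven by an input bounded by `h δ`.
Iterating `|e(n+1)| ≤ ρ |e(n)| + h δ` with `ρ = |1 + h K_P| < 1` gives
`|e(n)| ≤ ρ^(n-1) (|e(1)| - M) + M` for the fixed point `M = h δ / (1 - ρ)`, whose limit is `M`.
-/

open Filter

section ScalarRecursion

variable {a : ℕ → ℝ} {ρ c : ℝ}

theorem le_pow_mul_add_of_le_mul_add (hρ0 : 0 ≤ ρ) (hρ1 : ρ ≠ 1) (N : ℕ)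
    (hstep : ∀ n ≥ N, a (n + 1) ≤ ρ * a n + c) :
    ∀ n ≥ N, a n ≤ ρ ^ (n - N) * (a N - c / (1 - ρ)) + c / (1 - ρ) := by
  have hfix : ρ * (c / (1 - ρ)) + c = c / (1 - ρ) := by
    field_simp [sub_ne_zero.mpr hρ1.symm]
    ring
  intro n hn
  induction n, hn using Nat.le_induction with
  | base => simp
  | succ n hn ih =>
    calc a (n + 1) ≤ ρ * a n + c := hstep n hn
      _ ≤ ρ * (ρ ^ (n - N) * (a N - c / (1 - ρ)) + c / (1 - ρ)) + c := by gcongr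
      _ = ρ ^ (n + 1 - N) * (a N - c / (1 - ρ)) + c / (1 - ρ) := by
        rw [Nat.sub_add_comm hn, pow_succ]
        linear_combination hfix

theorem limsup_le_div_one_sub_of_le_mul_add (ha : ∀ n, 0 ≤ a n) (hρ0 : 0 ≤ ρ) (hρ1 : ρ < 1)
    (N : ℕ) (hstep : ∀ n ≥ N, a (n + 1) ≤ ρ * a n + c) :
    limsup a atTop ≤ c / (1 - ρ) := by
  set M := c / (1 - ρ)
  have hbound : Tendsto (fun n ↦ ρ ^ (n - N) * (a N - M) + M) atTop (nhds M) := by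
    have hpow : Tendsto (fun n ↦ ρ ^ (n - N)) atTop (nhds 0) :=
      (tendsto_pow_atTop_nhds_zero_of_lt_one hρ0 hρ1).comp (tendsto_sub_atTop_nat N)
    simpa using (hpow.mul_const (a N - M)).add_const M
  calc limsup a atTop ≤ limsup (fun n ↦ ρ ^ (n - N) * (a N - M) + M) atTop :=
        limsup_le_limsup
          (eventually_atTop.mpr ⟨N, le_pow_mul_add_of_le_mul_add hρ0 hρ1.ne N hstep⟩)
          (isCoboundedUnder_le_of_le atTop ha) hbound.isBoundedUnder_le
    _ = M := hbound.limsup_eq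

end ScalarRecursion

theorem ip_tracking_error_succ {α h K_P : ℝ} (hα : α ≠ 0) (hh : h ≠ 0)
    {y ystar u F Fhat : ℕ → ℝ} (n : ℕ)
    (hplant : ∀ n : ℕ, (y (n + 1) - y n) / h = F n + α * u n)
    (hFhat : Fhat (n + 1) = (y (n + 1) - y n) / h - α * u n)
    (hctrl : u (n + 1) = (1 / α) *
      (-Fhat (n + 1) + (ystar (n + 2) - ystar (n + 1)) / h + K_P * (y (n + 1) - ystar (n + 1)))) :
    y (n + 2) - ystar (n + 2)
      = (1 + h * K_P) * (y (n + 1) - ystar (n + 1)) + h * (F (n + 1) - F n) := by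
  have hlag : Fhat (n + 1) = F n := by rw [hFhat, hplant]; ring
  have hnext := hplant (n + 1)
  rw [hctrl, hlag] at hnext
  field_simp at hnext
  linear_combination hnext

theorem stmt_19 (α h K_P : ℝ) (hα : α ≠ 0) (hh : 0 < h)
    (hstab : |1 + h * K_P| < 1)
    (y ystar u F Fhat : ℕ → ℝ)
    (hplant : ∀ n : ℕ, (y (n + 1) - y n) / h = F n + α * u n)
    (hFhat : ∀ n : ℕ, 1 ≤ n →
      Fhat n = (y n - y (n - 1)) / h - α * u (n - 1))
    (hctrl : ∀ n : ℕ, 1 ≤ n → u n = (1 / α) *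
      (-Fhat n + (ystar (n + 1) - ystar n) / h + K_P * (y n - ystar n))) :
    (∀ n : ℕ, 1 ≤ n →
      y (n + 1) - ystar (n + 1)
        = (1 + h * K_P) * (y n - ystar n) + h * (F n - F (n - 1))) ∧
    (∀ δ : ℝ, (∀ n : ℕ, |F (n + 1) - F n| ≤ δ) →
      Filter.limsup (fun n : ℕ => |y n - ystar n|) atTop
        ≤ h * δ / (1 - |1 + h * K_P|)) := by
  have herr : ∀ n : ℕ, 1 ≤ n →
      y (n + 1) - ystar (n + 1)
        = (1 + h * K_P) * (y n - ystar n) + h * (F n - F (n - 1)) := by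
    intro n hn
    obtain ⟨m, rfl⟩ := Nat.exists_eq_add_of_le' hn
    exact ip_tracking_error_succ hα hh.ne' m hplant (hFhat (m + 1) hn) (hctrl (m + 1) hn)
  refine ⟨herr, fun δ hδ ↦ ?_⟩
  refine limsup_le_div_one_sub_of_le_mul_add (fun _ ↦ abs_nonneg _) (abs_nonneg _) hstab 1 ?_
  intro n hn
  obtain ⟨m, rfl⟩ := Nat.exists_eq_add_of_le' hn
  calc |y (m + 1 + 1) - ystar (m + 1 + 1)|
      ≤ |1 + h * K_P| * |y (m + 1) - ystar (m + 1)| + h * |F (m + 1) - F m| := by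
        rw [herr (m + 1) hn, ← abs_mul, ← abs_of_pos hh, ← abs_mul, abs_of_pos hh]
        exact abs_add_le _ _
    _ ≤ |1 + h * K_P| * |y (m + 1) - ystar (m + 1)| + h * δ := by gcongr; exact hδ m
end
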